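/- arXiv:1112.3307 — 6 statements merged into one kernel-verified Lean document; each statement's English description precedes it below -/
import Mathlib

section
/- Let X, Y, Z be real-valued random variables (with finite second moments) satisfying X + Y + Z = 0 almost surely. If random variables X', Y', Z' satisfy (X',Y') ~ (X,Y), (X',Z') ~ (X,Z), and (Y',Z') ~ (Y,Z), then (X',Y',Z') ~ (X,Y,Z), i.e., the triples are equal in joint distribution. -/
/-!
Since `(a + b + c)² = (a + b)² + (a + c)² + (b + c)² - a² - b² - c²`, the second moment of
`X' + Y' + Z'` is determined by the three pairwise laws, so it equals that of `X + Y + Z`, which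
is zero. Hence `Z' = -X' - Y'` a.s. as well, and both triples are the image of identically
distributed pairs under the same map `(x, y) ↦ (x, y, -x - y)`.
-/

open MeasureTheory ProbabilityTheory

section

variable {Ω Ω' : Type*} [MeasurableSpace Ω] [MeasurableSpace Ω'] {μ : Measure Ω} {ν : Measure Ω'}

lemma integral_add_add_sq {X Y Z : Ω → ℝ} (hX : MemLp X 2 μ) (hY : MemLp Y 2 μ)
    (hZ : MemLp Z 2 μ) :
    ∫ ω, (X ω + Y ω + Z ω) ^ 2 ∂μ
      = ∫ ω, (X ω + Y ω) ^ 2 ∂μ + ∫ ω, (X ω + Z ω) ^ 2 ∂μ + ∫ ω, (Y ω + Z ω) ^ 2 ∂μ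
        - ∫ ω, X ω ^ 2 ∂μ - ∫ ω, Y ω ^ 2 ∂μ - ∫ ω, Z ω ^ 2 ∂μ := by
  have iXY : Integrable (fun ω => (X ω + Y ω) ^ 2) μ := (hX.add hY).integrable_sq
  have iXZ : Integrable (fun ω => (X ω + Z ω) ^ 2) μ := (hX.add hZ).integrable_sq
  have iYZ : Integrable (fun ω => (Y ω + Z ω) ^ 2) μ := (hY.add hZ).integrable_sq
  have iX : Integrable (fun ω => X ω ^ 2) μ := hX.integrable_sq
  have iY : Integrable (fun ω => Y ω ^ 2) μ := hY.integrable_sq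
  have iZ : Integrable (fun ω => Z ω ^ 2) μ := hZ.integrable_sq
  have hpol : ∀ ω, (X ω + Y ω + Z ω) ^ 2 = (X ω + Y ω) ^ 2 + (X ω + Z ω) ^ 2 + (Y ω + Z ω) ^ 2
      - X ω ^ 2 - Y ω ^ 2 - Z ω ^ 2 := fun ω => by ring
  simp_rw [hpol]
  rw [integral_sub, integral_sub, integral_sub, integral_add, integral_add]
  all_goals fun_prop (disch := assumption)

lemma ae_eq_zero_of_integral_sq_eq_zero {X : Ω → ℝ} (hX : MemLp X 2 μ)
    (h : ∫ ω, X ω ^ 2 ∂μ = 0) : ∀ᵐ ω ∂μ, X ω = 0 := by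
  filter_upwards [(integral_eq_zero_iff_of_nonneg (fun ω => sq_nonneg (X ω)) hX.integrable_sq).1 h]
    with ω hω
  exact pow_eq_zero_iff two_ne_zero |>.mp hω

namespace ProbabilityTheory.IdentDistrib

lemma integral_add_sq_eq {X Y : Ω → ℝ} {X' Y' : Ω' → ℝ}
    (h : IdentDistrib (fun ω => (X' ω, Y' ω)) (fun ω => (X ω, Y ω)) ν μ) :
    ∫ ω, (X' ω + Y' ω) ^ 2 ∂ν = ∫ ω, (X ω + Y ω) ^ 2 ∂μ :=
  (h.comp (show Measurable fun p : ℝ × ℝ => (p.1 + p.2) ^ 2 by fun_prop)).integral_eq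

lemma integral_fst_sq_eq {X Y : Ω → ℝ} {X' Y' : Ω' → ℝ}
    (h : IdentDistrib (fun ω => (X' ω, Y' ω)) (fun ω => (X ω, Y ω)) ν μ) :
    ∫ ω, X' ω ^ 2 ∂ν = ∫ ω, X ω ^ 2 ∂μ :=
  (h.comp measurable_fst).sq.integral_eq

lemma integral_snd_sq_eq {X Y : Ω → ℝ} {X' Y' : Ω' → ℝ}
    (h : IdentDistrib (fun ω => (X' ω, Y' ω)) (fun ω => (X ω, Y ω)) ν μ) :
    ∫ ω, Y' ω ^ 2 ∂ν = ∫ ω, Y ω ^ 2 ∂μ :=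
  (h.comp measurable_snd).sq.integral_eq

lemma ae_add_add_eq_zero {X Y Z : Ω → ℝ} {X' Y' Z' : Ω' → ℝ}
    (hX : MemLp X 2 μ) (hY : MemLp Y 2 μ) (hZ : MemLp Z 2 μ)
    (hsum : ∀ᵐ ω ∂μ, X ω + Y ω + Z ω = 0)
    (hXY : IdentDistrib (fun ω => (X' ω, Y' ω)) (fun ω => (X ω, Y ω)) ν μ)
    (hXZ : IdentDistrib (fun ω => (X' ω, Z' ω)) (fun ω => (X ω, Z ω)) ν μ)
    (hYZ : IdentDistrib (fun ω => (Y' ω, Z' ω)) (fun ω => (Y ω, Z ω)) ν μ) :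
    ∀ᵐ ω ∂ν, X' ω + Y' ω + Z' ω = 0 := by
  have hX' : MemLp X' 2 ν := (hXY.comp measurable_fst).symm.memLp_snd hX
  have hY' : MemLp Y' 2 ν := (hXY.comp measurable_snd).symm.memLp_snd hY
  have hZ' : MemLp Z' 2 ν := (hXZ.comp measurable_snd).symm.memLp_snd hZ
  have hμ : ∫ ω, (X ω + Y ω + Z ω) ^ 2 ∂μ = 0 := by
    have hsq : (fun ω => (X ω + Y ω + Z ω) ^ 2) =ᵐ[μ] fun _ => 0 :=
      hsum.mono fun ω hω => by simp [hω]
    rw [integral_congr_ae hsq, integral_zero]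
  refine ae_eq_zero_of_integral_sq_eq_zero ((hX'.add hY').add hZ') ?_
  rw [integral_add_add_sq hX' hY' hZ', hXY.integral_add_sq_eq, hXZ.integral_add_sq_eq,
    hYZ.integral_add_sq_eq, hXY.integral_fst_sq_eq, hXY.integral_snd_sq_eq,
    hXZ.integral_snd_sq_eq, ← integral_add_add_sq hX hY hZ, hμ]

lemma prodMk_of_ae_eq_comp {α β γ : Type*} [MeasurableSpace α] [MeasurableSpace β]
    [MeasurableSpace γ] {X : Ω → α} {Y : Ω → β} {Z : Ω → γ} {X' : Ω' → α} {Y' : Ω' → β}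
    {Z' : Ω' → γ} {g : α × β → γ} (hg : Measurable g)
    (h : IdentDistrib (fun ω => (X' ω, Y' ω)) (fun ω => (X ω, Y ω)) ν μ)
    (hZ' : ∀ᵐ ω ∂ν, Z' ω = g (X' ω, Y' ω)) (hZ : ∀ᵐ ω ∂μ, Z ω = g (X ω, Y ω)) :
    IdentDistrib (fun ω => (X' ω, Y' ω, Z' ω)) (fun ω => (X ω, Y ω, Z ω)) ν μ := by
  have hu : Measurable fun p : α × β => (p.1, p.2, g p) := by fun_prop
  have graph' :
      IdentDistrib (fun ω => (X' ω, Y' ω, Z' ω)) (fun ω => (X' ω, Y' ω, g (X' ω, Y' ω))) ν ν :=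
    (IdentDistrib.of_ae_eq (hu.comp_aemeasurable h.aemeasurable_fst)
      (by filter_upwards [hZ'] with ω hω; simp [hω])).symm
  have graph : IdentDistrib (fun ω => (X ω, Y ω, g (X ω, Y ω))) (fun ω => (X ω, Y ω, Z ω)) μ μ :=
    IdentDistrib.of_ae_eq (hu.comp_aemeasurable h.aemeasurable_snd)
      (by filter_upwards [hZ] with ω hω; simp [hω])
  exact graph'.trans ((h.comp hu).trans graph)

end ProbabilityTheory.IdentDistrib

end

theorem stmt1_general {Ω Ω' : Type*} [MeasurableSpace Ω] [MeasurableSpace Ω']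
    (μ : Measure Ω) (ν : Measure Ω')
    (X Y Z : Ω → ℝ) (X' Y' Z' : Ω' → ℝ)
    (hX : MemLp X 2 μ) (hY : MemLp Y 2 μ) (hZ : MemLp Z 2 μ)
    (hsum : ∀ᵐ ω ∂μ, X ω + Y ω + Z ω = 0)
    (hXY : IdentDistrib (fun ω => (X' ω, Y' ω)) (fun ω => (X ω, Y ω)) ν μ)
    (hXZ : IdentDistrib (fun ω => (X' ω, Z' ω)) (fun ω => (X ω, Z ω)) ν μ)
    (hYZ : IdentDistrib (fun ω => (Y' ω, Z' ω)) (fun ω => (Y ω, Z ω)) ν μ) :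
    IdentDistrib (fun ω => (X' ω, Y' ω, Z' ω)) (fun ω => (X ω, Y ω, Z ω)) ν μ := by
  have hsum' := hXY.ae_add_add_eq_zero hX hY hZ hsum hXZ hYZ
  exact hXY.prodMk_of_ae_eq_comp (g := fun p => -p.1 - p.2) (by fun_prop)
    (hsum'.mono fun _ h => by dsimp only; linarith) (hsum.mono fun _ h => by dsimp only; linarith)

/-- If `X + Y + Z = 0` a.s. (with finite second moments) and `(X',Y') ~ (X,Y)`,
`(X',Z') ~ (X,Z)`, `(Y',Z') ~ (Y,Z)`, then `X' + Y' + Z' = 0` a.s. -/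
theorem stmt1 {Ω Ω' : Type*} [MeasurableSpace Ω] [MeasurableSpace Ω']
    (μ : Measure Ω) (ν : Measure Ω') [IsProbabilityMeasure μ] [IsProbabilityMeasure ν]
    (X Y Z : Ω → ℝ) (X' Y' Z' : Ω' → ℝ)
    (hX : MemLp X 2 μ) (hY : MemLp Y 2 μ) (hZ : MemLp Z 2 μ)
    (hsum : ∀ᵐ ω ∂μ, X ω + Y ω + Z ω = 0)
    (hXY : IdentDistrib (fun ω => (X' ω, Y' ω)) (fun ω => (X ω, Y ω)) ν μ)
    (hXZ : IdentDistrib (fun ω => (X' ω, Z' ω)) (fun ω => (X ω, Z ω)) ν μ)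
    (hYZ : IdentDistrib (fun ω => (Y' ω, Z' ω)) (fun ω => (Y ω, Z ω)) ν μ) :
    IdentDistrib (fun ω => (X' ω, Y' ω, Z' ω)) (fun ω => (X ω, Y ω, Z ω)) ν μ :=
  stmt1_general μ ν X Y Z X' Y' Z' hX hY hZ hsum hXY hXZ hYZ
end

section
/- Let F be a u×m real matrix and let X be an R^m-valued random vector with F X = 0 almost surely and finite second moments. Suppose X' is an R^m-valued random vector such that A_l X' ~ A_l X (equal in distribution) for matrices A_1,...,A_L, where A_l is u_l×m. If there exists a positive definite u×u matrix C and symmetric matrices Σ_l (u_l×u_l) with F^T C F = Σ_{l=1}^L A_l^T Σ_l A_l, then F X' = 0 almost surely. -/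
/-!
The quadratic form `v ↦ (F v)ᵀ C (F v)` equals `∑ₗ (Aₗ v)ᵀ Σₗ (Aₗ v)`, and each summand depends
on `v` only through `Aₗ v`. Its expectation is therefore the same under `X'` as under `X`, where
it vanishes because `F X = 0`. Since `C` is positive definite the form is nonnegative, so it
vanishes a.s. under `X'`, and then so does `F X'`.
-/

open MeasureTheory ProbabilityTheory Matrix

lemma dotProduct_mulVec_mulVec_self {ι κ : Type*} [Fintype ι] [Fintype κ] (M : Matrix κ ι ℝ)
    (S : Matrix κ κ ℝ) (v : ι → ℝ) :
    M *ᵥ v ⬝ᵥ S *ᵥ (M *ᵥ v) = v ⬝ᵥ (Mᵀ * S * M) *ᵥ v := by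
  rw [dotProduct_mulVec, vecMul_mulVec, dotProduct_mulVec, vecMul_vecMul, Matrix.mul_assoc,
    ← dotProduct_mulVec]

section

variable {α : Type*} [MeasurableSpace α] {μ : Measure α} {ι κ : Type*} [Fintype ι] [Fintype κ]

lemma MeasureTheory.MemLp.matrix_mulVec {p : ENNReal} (M : Matrix κ ι ℝ) {Y : α → ι → ℝ}
    (hY : MemLp Y p μ) : MemLp (fun ω => M *ᵥ Y ω) p μ :=
  (Matrix.mulVecLin M).toContinuousLinearMap.comp_memLp' hY

lemma integrable_dotProduct_of_memLp {Y Z : α → ι → ℝ} (hY : MemLp Y 2 μ) (hZ : MemLp Z 2 μ) :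
    Integrable (fun ω => Y ω ⬝ᵥ Z ω) μ :=
  integrable_finsetSum _ fun i _ => (hY.eval i).integrable_mul (hZ.eval i)

lemma integrable_dotProduct_mulVec_self_of_memLp (S : Matrix ι ι ℝ) {Y : α → ι → ℝ}
    (hY : MemLp Y 2 μ) : Integrable (fun ω => Y ω ⬝ᵥ S *ᵥ Y ω) μ :=
  integrable_dotProduct_of_memLp hY (hY.matrix_mulVec S)

lemma ae_eq_zero_of_integral_dotProduct_mulVec_self_eq_zero {C : Matrix ι ι ℝ} (hC : C.PosDef)
    {Y : α → ι → ℝ} (hint : Integrable (fun ω => Y ω ⬝ᵥ C *ᵥ Y ω) μ)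
    (hzero : ∫ ω, Y ω ⬝ᵥ C *ᵥ Y ω ∂μ = 0) : ∀ᵐ ω ∂μ, Y ω = 0 := by
  have hnonneg : 0 ≤ fun ω => Y ω ⬝ᵥ C *ᵥ Y ω := fun ω => by
    simpa using hC.posSemidef.dotProduct_mulVec_nonneg (Y ω)
  filter_upwards [(integral_eq_zero_iff_of_nonneg hnonneg hint).1 hzero] with ω hω
  by_contra hne
  simpa [hω] using hC.dotProduct_mulVec_pos hne

end

theorem stmt2_general {Ω Ω' : Type*} [MeasurableSpace Ω] [MeasurableSpace Ω']
    (μ : Measure Ω) (ν : Measure Ω')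
    (u m L : ℕ) (F : Matrix (Fin u) (Fin m) ℝ)
    (ul : Fin L → ℕ) (A : (l : Fin L) → Matrix (Fin (ul l)) (Fin m) ℝ)
    (Sig : (l : Fin L) → Matrix (Fin (ul l)) (Fin (ul l)) ℝ)
    (C : Matrix (Fin u) (Fin u) ℝ) (hC : C.PosDef)
    (heq : Fᵀ * C * F = ∑ l, (A l)ᵀ * Sig l * A l)
    (X : Ω → Fin m → ℝ) (X' : Ω' → Fin m → ℝ)
    (hX2 : ∀ i, MemLp (fun ω => X ω i) 2 μ)
    (hX0 : ∀ᵐ ω ∂μ, F.mulVec (X ω) = 0)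
    (hA : ∀ l, IdentDistrib (fun ω => (A l).mulVec (X' ω)) (fun ω => (A l).mulVec (X ω)) ν μ) :
    ∀ᵐ ω ∂ν, F.mulVec (X' ω) = 0 := by
  set q : (l : Fin L) → (Fin (ul l) → ℝ) → ℝ := fun l y => y ⬝ᵥ Sig l *ᵥ y
  have hsplit (v : Fin m → ℝ) : F *ᵥ v ⬝ᵥ C *ᵥ (F *ᵥ v) = ∑ l, q l (A l *ᵥ v) := by
    simp only [q, dotProduct_mulVec_mulVec_self, heq, sum_mulVec, dotProduct_sum]
  have hident (l : Fin L) :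
      IdentDistrib (fun ω => q l (A l *ᵥ X' ω)) (fun ω => q l (A l *ᵥ X ω)) ν μ :=
    (hA l).comp (u := q l) (by fun_prop)
  have hint (l : Fin L) : Integrable (fun ω => q l (A l *ᵥ X ω)) μ :=
    integrable_dotProduct_mulVec_self_of_memLp _ ((memLp_pi_iff.2 hX2).matrix_mulVec (A l))
  have hint' (l : Fin L) : Integrable (fun ω => q l (A l *ᵥ X' ω)) ν :=
    (hident l).integrable_iff.2 (hint l)
  refine ae_eq_zero_of_integral_dotProduct_mulVec_self_eq_zero hC ?_ ?_
  · simpa only [hsplit] using integrable_finsetSum _ fun l _ => hint' l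
  · calc ∫ ω, F *ᵥ X' ω ⬝ᵥ C *ᵥ (F *ᵥ X' ω) ∂ν
        = ∑ l, ∫ ω, q l (A l *ᵥ X' ω) ∂ν := by
          simp only [hsplit]; exact integral_finsetSum _ fun l _ => hint' l
      _ = ∑ l, ∫ ω, q l (A l *ᵥ X ω) ∂μ := by simp only [fun l => (hident l).integral_eq]
      _ = ∫ ω, F *ᵥ X ω ⬝ᵥ C *ᵥ (F *ᵥ X ω) ∂μ := by
          simp only [hsplit]; exact (integral_finsetSum _ fun l _ => hint l).symm
      _ = 0 := integral_eq_zero_of_ae (by filter_upwards [hX0] with ω hω; simp [hω])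

/-- First half of the Fundamental Property of Polytope Codes: if `F X = 0` a.s.,
`Aₗ X' ~ Aₗ X` for each `l`, and `Fᵀ C F = ∑ₗ Aₗᵀ Σₗ Aₗ` for a positive definite `C`,
then `F X' = 0` a.s. -/
theorem stmt2 {Ω Ω' : Type*} [MeasurableSpace Ω] [MeasurableSpace Ω']
    (μ : Measure Ω) (ν : Measure Ω') [IsProbabilityMeasure μ] [IsProbabilityMeasure ν]
    (u m L : ℕ) (F : Matrix (Fin u) (Fin m) ℝ)
    (ul : Fin L → ℕ) (A : (l : Fin L) → Matrix (Fin (ul l)) (Fin m) ℝ)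
    (Sig : (l : Fin L) → Matrix (Fin (ul l)) (Fin (ul l)) ℝ)
    (hSig : ∀ l, (Sig l).IsSymm)
    (C : Matrix (Fin u) (Fin u) ℝ) (hC : C.PosDef)
    (heq : Fᵀ * C * F = ∑ l, (A l)ᵀ * Sig l * A l)
    (X : Ω → Fin m → ℝ) (X' : Ω' → Fin m → ℝ)
    (hXmeas : Measurable X)
    (hX2 : ∀ i, MemLp (fun ω => X ω i) 2 μ)
    (hX0 : ∀ᵐ ω ∂μ, F.mulVec (X ω) = 0)
    (hA : ∀ l, IdentDistrib (fun ω => (A l).mulVec (X' ω)) (fun ω => (A l).mulVec (X ω)) ν μ) :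
    ∀ᵐ ω ∂ν, F.mulVec (X' ω) = 0 :=
  stmt2_general μ ν u m L F ul A Sig C hC heq X X' hX2 hX0 hA
end

section
/- Let F be a 1×m integer row vector with all entries nonzero, and let X be an R^m random vector with F X = 0 a.s. and finite second moments. Suppose X' satisfies: (X'_i, X'_j) ~ (X_i, X_j) for all pairs i,j, and (X'_2,...,X'_m) ~ (X_2,...,X_m). Then X' ~ X. -/
/-!
The pairwise marginals determine every second moment `E[X i * X j]`, hence
`E[(F ⬝ X')²] = E[(F ⬝ X)²] = 0` and `X'` also lies on the hyperplane `F ⬝ x = 0` almost surely.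
On that hyperplane the coordinate `0` is a measurable function of the others (as `F 0 ≠ 0`), so `X`
and `X'` are almost surely the same measurable image of their identically distributed tails.
-/

open MeasureTheory ProbabilityTheory

lemma ProbabilityTheory.identDistrib_of_subsingleton {α β γ : Type*} [MeasurableSpace α]
    [MeasurableSpace β] [MeasurableSpace γ] [Subsingleton γ] {μ : Measure α} {ν : Measure β}
    [IsProbabilityMeasure μ] [IsProbabilityMeasure ν] (f : α → γ) (g : β → γ) :
    IdentDistrib f g μ ν where
  aemeasurable_fst := (measurable_of_subsingleton_codomain f).aemeasurable
  aemeasurable_snd := (measurable_of_subsingleton_codomain g).aemeasurable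
  map_eq := by
    have := Measure.isProbabilityMeasure_map (μ := μ)
      (measurable_of_subsingleton_codomain f).aemeasurable
    have := Measure.isProbabilityMeasure_map (μ := ν)
      (measurable_of_subsingleton_codomain g).aemeasurable
    ext s -
    rcases s.eq_empty_or_nonempty with rfl | hs
    · simp
    · simp [Subsingleton.eq_univ_of_nonempty hs]

lemma ProbabilityTheory.IdentDistrib.of_ae_eq_comp {α β γ δ : Type*} [MeasurableSpace α]
    [MeasurableSpace β] [MeasurableSpace γ] [MeasurableSpace δ] {μ : Measure α} {ν : Measure β}
    {T : α → δ} {T' : β → δ} {f : α → γ} {f' : β → γ} {g : δ → γ}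
    (h : IdentDistrib T T' μ ν) (hg : Measurable g)
    (hf : f =ᵐ[μ] g ∘ T) (hf' : f' =ᵐ[ν] g ∘ T') : IdentDistrib f f' μ ν :=
  ((IdentDistrib.of_ae_eq (hg.comp_aemeasurable h.aemeasurable_fst) hf.symm).symm.trans
    (h.comp hg)).trans (IdentDistrib.of_ae_eq (hg.comp_aemeasurable h.aemeasurable_snd) hf'.symm)

section SecondMoments

variable {ι Ω Ω' : Type*} [Fintype ι] [MeasurableSpace Ω] [MeasurableSpace Ω']
  {μ : Measure Ω} {ν : Measure Ω'}

lemma sq_sum_mul (c y : ι → ℝ) :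
    (∑ i, c i * y i) ^ 2 = ∑ i, ∑ j, c i * c j * (y i * y j) := by
  rw [sq, Fintype.sum_mul_sum]
  exact Fintype.sum_congr _ _ fun i => Fintype.sum_congr _ _ fun j => by ring

lemma integrable_sq_sum_mul {X : Ω → ι → ℝ} (hX : ∀ i j, Integrable (fun ω => X ω i * X ω j) μ)
    (c : ι → ℝ) : Integrable (fun ω => (∑ i, c i * X ω i) ^ 2) μ := by
  simp only [sq_sum_mul]
  exact integrable_finsetSum _ fun i _ => integrable_finsetSum _ fun j _ => (hX i j).const_mul _

lemma integral_sq_sum_mul {X : Ω → ι → ℝ} (hX : ∀ i j, Integrable (fun ω => X ω i * X ω j) μ)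
    (c : ι → ℝ) :
    ∫ ω, (∑ i, c i * X ω i) ^ 2 ∂μ = ∑ i, ∑ j, c i * c j * ∫ ω, X ω i * X ω j ∂μ := by
  simp only [sq_sum_mul]
  rw [integral_finsetSum _ fun i _ => integrable_finsetSum _ fun j _ => (hX i j).const_mul _]
  refine Fintype.sum_congr _ _ fun i => ?_
  rw [integral_finsetSum _ fun j _ => (hX i j).const_mul _]
  exact Fintype.sum_congr _ _ fun j => integral_const_mul _ _

lemma ae_sum_mul_eq_zero_of_identDistrib_pairs {X : Ω → ι → ℝ} {X' : Ω' → ι → ℝ}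
    (hpairs : ∀ i j, IdentDistrib (fun ω => (X' ω i, X' ω j)) (fun ω => (X ω i, X ω j)) ν μ)
    (hX2 : ∀ i, MemLp (fun ω => X ω i) 2 μ) {c : ι → ℝ} (hX0 : ∀ᵐ ω ∂μ, ∑ i, c i * X ω i = 0) :
    ∀ᵐ ω ∂ν, ∑ i, c i * X' ω i = 0 := by
  have hprod : ∀ i j, IdentDistrib (fun ω => X' ω i * X' ω j) (fun ω => X ω i * X ω j) ν μ :=
    fun i j => (hpairs i j).comp (measurable_fst.mul measurable_snd)
  have hXint : ∀ i j, Integrable (fun ω => X ω i * X ω j) μ := fun i j =>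
    (hX2 i).integrable_mul (hX2 j)
  have hX'int : ∀ i j, Integrable (fun ω => X' ω i * X' ω j) ν := fun i j =>
    (hprod i j).integrable_iff.mpr (hXint i j)
  have hzero : ∫ ω, (∑ i, c i * X' ω i) ^ 2 ∂ν = 0 := calc
    _ = ∫ ω, (∑ i, c i * X ω i) ^ 2 ∂μ := by
      simp only [integral_sq_sum_mul hX'int, integral_sq_sum_mul hXint, (hprod _ _).integral_eq]
    _ = 0 := integral_eq_zero_of_ae (hX0.mono fun ω h => by simp [h])
  filter_upwards [(integral_eq_zero_iff_of_nonneg_ae (.of_forall fun ω => sq_nonneg _)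
    (integrable_sq_sum_mul hX'int c)).mp hzero] with ω h
  exact pow_eq_zero_iff two_ne_zero |>.mp h

end SecondMoments

section HyperplaneLift

variable {ι : Type*} [Fintype ι] {p : ι → Prop} [DecidablePred p]

/-- With `p i ↔ i ≠ i₀`: the point of the hyperplane `∑ i, c i * y i = 0` with the given
coordinates off `i₀`. -/
noncomputable def hyperplaneLift (c : ι → ℝ) (i₀ : ι) (v : {i // p i} → ℝ) : ι → ℝ :=
  fun i => if h : p i then v ⟨i, h⟩ else -(∑ j : {i // p i}, c j * v j) / c i₀

lemma measurable_hyperplaneLift (c : ι → ℝ) (i₀ : ι) :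
    Measurable (hyperplaneLift (p := p) c i₀) := by
  refine measurable_pi_lambda _ fun i => ?_
  by_cases h : p i
  · simpa only [hyperplaneLift, dif_pos h] using measurable_pi_apply _
  · simp only [hyperplaneLift, dif_neg h]
    fun_prop

lemma hyperplaneLift_restrict [DecidableEq ι] {c : ι → ℝ} {i₀ : ι} (hp : ∀ i, p i ↔ i ≠ i₀)
    (hc : c i₀ ≠ 0) {y : ι → ℝ} (hy : ∑ i, c i * y i = 0) :
    hyperplaneLift c i₀ (fun j : {i // p i} => y j) = y := by
  funext i
  by_cases h : p i
  · simp only [hyperplaneLift, dif_pos h]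
  · obtain rfl : i = i₀ := not_not.mp (mt (hp i).mpr h)
    have hsplit : c i * y i + ∑ j : {j // p j}, c j * y j = 0 := by
      rw [← Finset.sum_subtype (Finset.univ.erase i) (fun j => by simp [hp j])
          (fun j => c j * y j),
        Finset.add_sum_erase _ (fun j => c j * y j) (Finset.mem_univ i), hy]
    simp only [hyperplaneLift, dif_neg h]
    field_simp
    linarith

end HyperplaneLift

theorem stmt4_general {Ω Ω' : Type*} [MeasurableSpace Ω] [MeasurableSpace Ω']
    (μ : Measure Ω) (ν : Measure Ω') [IsProbabilityMeasure μ] [IsProbabilityMeasure ν]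
    (m : ℕ) (F : Fin m → ℤ) (hF : ∀ i, F i ≠ 0)
    (X : Ω → Fin m → ℝ) (X' : Ω' → Fin m → ℝ)
    (hX2 : ∀ i, MemLp (fun ω => X ω i) 2 μ)
    (hX0 : ∀ᵐ ω ∂μ, ∑ i, (F i : ℝ) * X ω i = 0)
    (hpairs : ∀ i j : Fin m,
      IdentDistrib (fun ω => (X' ω i, X' ω j)) (fun ω => (X ω i, X ω j)) ν μ)
    (htail : IdentDistrib
      (fun ω => fun i : {i : Fin m // (i : ℕ) ≠ 0} => X' ω i)
      (fun ω => fun i : {i : Fin m // (i : ℕ) ≠ 0} => X ω i) ν μ) :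
    IdentDistrib X' X ν μ := by
  rcases Nat.eq_zero_or_pos m with rfl | hm
  · exact identDistrib_of_subsingleton X' X
  set i₀ : Fin m := ⟨0, hm⟩
  have hp (i : Fin m) : (i : ℕ) ≠ 0 ↔ i ≠ i₀ := by simp [i₀, Fin.ext_iff]
  have hc : (F i₀ : ℝ) ≠ 0 := Int.cast_ne_zero.mpr (hF i₀)
  have hX'0 := ae_sum_mul_eq_zero_of_identDistrib_pairs hpairs hX2 hX0
  exact htail.of_ae_eq_comp (measurable_hyperplaneLift _ i₀)
    (hX'0.mono fun ω h => (hyperplaneLift_restrict hp hc h).symm)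
    (hX0.mono fun ω h => (hyperplaneLift_restrict hp hc h).symm)

/-- Corollary 1 of the Fundamental Property of Polytope Codes: a single linear
constraint with all-nonzero integer coefficients, all pairwise marginals matching,
and the joint distribution of the last `m-1` coordinates matching, force `X' ~ X`. -/
theorem stmt4 {Ω Ω' : Type*} [MeasurableSpace Ω] [MeasurableSpace Ω']
    (μ : Measure Ω) (ν : Measure Ω') [IsProbabilityMeasure μ] [IsProbabilityMeasure ν]
    (m : ℕ) (F : Fin m → ℤ) (hF : ∀ i, F i ≠ 0)
    (X : Ω → Fin m → ℝ) (X' : Ω' → Fin m → ℝ)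
    (hXmeas : Measurable X)
    (hX2 : ∀ i, MemLp (fun ω => X ω i) 2 μ)
    (hX0 : ∀ᵐ ω ∂μ, ∑ i, (F i : ℝ) * X ω i = 0)
    (hpairs : ∀ i j : Fin m,
      IdentDistrib (fun ω => (X' ω i, X' ω j)) (fun ω => (X ω i, X ω j)) ν μ)
    (htail : IdentDistrib
      (fun ω => fun i : {i : Fin m // (i : ℕ) ≠ 0} => X' ω i)
      (fun ω => fun i : {i : Fin m // (i : ℕ) ≠ 0} => X ω i) ν μ) :
    IdentDistrib X' X ν μ :=
  stmt4_general μ ν m F hF X X' hX2 hX0 hpairs htail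
end

section
/- Let K be the (m+v)×(m−2) Vandermonde-type matrix whose row associated to index a ∈ {1,...,m+v} is (1, α(a), α(a)^2,...,α(a)^{m-3}) for distinct reals α(a). For indices e1, e2 (with α(e1) < α(e2)) and f1, f2 (with α(f2) < α(f1), and α(f1),α(f2) both greater than α(e1),α(e2)) and a set Z of m−4 further indices disjoint from {e1,e2,f1,f2}, the product of determinants |K_{e1,e2,Z}| · |K_{f1,f2,Z}| · |K_{e1,f1,Z}| · |K_{e2,f2,Z}| is strictly negative, where K_S denotes the square submatrix of K formed by the rows indexed by S ∪ Z (rows within each submatrix ordered consistently by α). -/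
/-!
Each determinant factors as `det V(x, y, z) = (y - x) · ∏ᵢ (zᵢ - x) · ∏ᵢ (zᵢ - y) · det V(z)`.
In the product of the four determinants every node `a1, a2, b1, b2` is paired with `z` exactly
twice and `det V(z)` occurs four times, so everything except the four leading differences is a
square, nonzero because the nodes are distinct. Of the leading differences
`(a2 - a1) (b2 - b1) (b1 - a1) (b2 - a2)` only `b2 - b1` is negative.
-/

open Matrix

section CommRing

variable {R : Type*} [CommRing R] {n : ℕ}

theorem det_vandermonde_cons (x : R) (v : Fin n → R) :
    (vandermonde (Fin.cons x v)).det = (∏ i, (v i - x)) * (vandermonde v).det := by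
  simp_rw [det_vandermonde, Fin.prod_univ_succ, Fin.prod_Ioi_zero, Fin.prod_Ioi_succ,
    Fin.cons_succ, Fin.cons_zero]

theorem det_vandermonde_cons_cons (x y : R) (v : Fin n → R) :
    (vandermonde (Fin.cons x (Fin.cons y v))).det =
      (y - x) * (∏ i, (v i - x)) * (∏ i, (v i - y)) * (vandermonde v).det := by
  rw [det_vandermonde_cons, det_vandermonde_cons, Fin.prod_univ_succ, Fin.cons_zero]
  simp only [Fin.cons_succ]
  ring

theorem det_vandermonde_cons_cons_four_mul (a1 a2 b1 b2 : R) (z : Fin n → R) :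
    (vandermonde (Fin.cons a1 (Fin.cons a2 z))).det *
    (vandermonde (Fin.cons b1 (Fin.cons b2 z))).det *
    (vandermonde (Fin.cons a1 (Fin.cons b1 z))).det *
    (vandermonde (Fin.cons a2 (Fin.cons b2 z))).det =
      (a2 - a1) * (b2 - b1) * (b1 - a1) * (b2 - a2) *
        ((∏ i, (z i - a1)) * (∏ i, (z i - a2)) * (∏ i, (z i - b1)) * (∏ i, (z i - b2)) *
          (vandermonde z).det ^ 2) ^ 2 := by
  simp only [det_vandermonde_cons_cons]
  ring

end CommRing

/-- Determinant sign condition for the Vandermonde MDS construction: with nodes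
`a1 < a2 < b2 < b1` (so `α(e1) < α(e2)`, `α(f2) < α(f1)`, and the `f`-values exceed the
`e`-values) and further distinct nodes `z` (the `α`-values of the index set `Z`, listed
in a common order in all four submatrices), the product of the four Vandermonde
determinants `|K_{e1,e2,Z}| · |K_{f1,f2,Z}| · |K_{e1,f1,Z}| · |K_{e2,f2,Z}|`
is strictly negative. -/
theorem stmt6 (n : ℕ) (a1 a2 b1 b2 : ℝ) (z : Fin n → ℝ)
    (ha : a1 < a2) (hb : b2 < b1) (hab : a2 < b2)
    (hzinj : Function.Injective z)
    (hz : ∀ i, z i ≠ a1 ∧ z i ≠ a2 ∧ z i ≠ b1 ∧ z i ≠ b2) :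
    (Matrix.vandermonde (Fin.cons a1 (Fin.cons a2 z))).det *
    (Matrix.vandermonde (Fin.cons b1 (Fin.cons b2 z))).det *
    (Matrix.vandermonde (Fin.cons a1 (Fin.cons b1 z))).det *
    (Matrix.vandermonde (Fin.cons a2 (Fin.cons b2 z))).det < 0 := by
  rw [det_vandermonde_cons_cons_four_mul]
  have hnodes : (a2 - a1) * (b2 - b1) * (b1 - a1) * (b2 - a2) < 0 :=
    mul_neg_of_neg_of_pos (mul_neg_of_neg_of_pos
      (mul_neg_of_pos_of_neg (by linarith) (by linarith)) (by linarith)) (by linarith)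
  have hprod {c : ℝ} (hc : ∀ i, z i ≠ c) : ∏ i, (z i - c) ≠ 0 :=
    Finset.prod_ne_zero_iff.2 fun i _ => sub_ne_zero.2 (hc i)
  have hdet : (vandermonde z).det ≠ 0 := det_vandermonde_ne_zero_iff.2 hzinj
  refine mul_neg_of_neg_of_pos hnodes (sq_pos_of_ne_zero ?_)
  exact mul_ne_zero (mul_ne_zero (mul_ne_zero (mul_ne_zero
    (hprod fun i => (hz i).1) (hprod fun i => (hz i).2.1)) (hprod fun i => (hz i).2.2.1))
    (hprod fun i => (hz i).2.2.2)) (pow_ne_zero 2 hdet)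
end

section
/- Let X be uniformly distributed on the set P_k = { x ∈ Z^m : F x = 0, |x_i| ≤ k for all i }, where F is an integer u×m matrix, and let K be an integer matrix whose columns form a basis of the rational null space of F. Then for every subset S ⊆ {1,...,m}, the limit as k → ∞ of H(X_S) / log k equals rank(K_S), where K_S is the submatrix of K consisting of the rows indexed by S and H denotes Shannon entropy. -/
open Filter

/-- The integer points of the polytope `{x ∈ ℤ^m : F x = 0, |x_i| ≤ k}`. -/
noncomputable def polytopePts (u m : ℕ) (F : Matrix (Fin u) (Fin m) ℤ) (k : ℕ) : Finset (Fin m → ℤ) :=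
  (Fintype.piFinset fun _ : Fin m => Finset.Icc (-(k : ℤ)) (k : ℤ)).filter
    fun x => F.mulVec x = 0

/-- Shannon entropy (natural log) of the pushforward under `f` of the uniform
distribution on the finite set `P`. -/
noncomputable def projEntropy {β γ : Type*} [DecidableEq β] [DecidableEq γ]
    (P : Finset β) (f : β → γ) : ℝ :=
  ∑ y ∈ P.image f,
    Real.negMulLog (((P.filter fun x => f x = y).card : ℝ) / (P.card : ℝ))

open Matrix

/-!
Write `d = rank K_S` and `n = dim ker K_S`, so that `d + n = r`. Integer points of the box
`[-k, k]^ι` whose pairwise differences lie in a rational subspace `W` are determined by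
`dim W` suitable coordinates, so there are at most `(2k+1)^(dim W)` of them. Hence the
projection of `P_k` onto `S` takes at most `(2k+1)^d` values, which bounds `H(X_S)` above by
`d log(2k+1)`, and each fibre of the projection has at most `(2k+1)^n` points. On the other
hand `P_k` contains the injective image under `K` of a box of side `≍ k`, so
`|P_k| ≥ (2⌊k/D⌋+1)^r`; since `X` is uniform, `H(X_S) ≥ log|P_k| - log(max fibre)
≥ r log(2⌊k/D⌋+1) - n log(2k+1)`. Dividing by `log k`, both bounds tend to `d`.
-/

theorem Real.sum_negMulLog_le_log_card {α : Type*} (s : Finset α) {p : α → ℝ}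
    (hp : ∀ y ∈ s, 0 < p y) (hsum : ∑ y ∈ s, p y = 1) :
    ∑ y ∈ s, Real.negMulLog (p y) ≤ Real.log s.card := by
  -- Jensen's inequality for `log` at the points `(p y)⁻¹` with weights `p y`.
  have jensen := strictConcaveOn_log_Ioi.concaveOn.le_map_sum (p := fun y => (p y)⁻¹)
    (fun y hy => (hp y hy).le) hsum fun y hy => Set.mem_Ioi.mpr (inv_pos.mpr (hp y hy))
  have hcard : ∑ y ∈ s, p y * (p y)⁻¹ = s.card := by
    rw [Finset.sum_congr rfl fun y hy => mul_inv_cancel₀ (hp y hy).ne']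
    simp
  simpa [Real.negMulLog, Real.log_inv, hcard] using jensen

theorem Real.neg_log_le_sum_negMulLog {α : Type*} {s : Finset α} {p : α → ℝ} {q : ℝ}
    (hp : ∀ y ∈ s, 0 < p y) (hq : ∀ y ∈ s, p y ≤ q) (hsum : ∑ y ∈ s, p y = 1) :
    -Real.log q ≤ ∑ y ∈ s, Real.negMulLog (p y) := by
  calc -Real.log q = ∑ y ∈ s, p y * -Real.log q := by rw [← Finset.sum_mul, hsum, one_mul]
    _ ≤ ∑ y ∈ s, Real.negMulLog (p y) := Finset.sum_le_sum fun y hy => by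
        rw [Real.negMulLog, neg_mul, mul_neg, neg_le_neg_iff]
        exact mul_le_mul_of_nonneg_left (Real.log_le_log (hp y hy) (hq y hy)) (hp y hy).le

theorem Submodule.exists_finset_card_eq_finrank_forall_eq_zero {K ι : Type*} [Field K]
    [Fintype ι] (W : Submodule K (ι → K)) :
    ∃ T : Finset ι, T.card = Module.finrank K W ∧ ∀ w ∈ W, (∀ i ∈ T, w i = 0) → w = 0 := by
  classical
  -- The coordinate functionals span `Dual W`; `T` indexes a basis of `Dual W` chosen among them.
  let coord : ι → Module.Dual K W := fun i => (LinearMap.proj i).comp W.subtype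
  have hspan : Submodule.span K (Set.range coord) = ⊤ := by
    refine Submodule.eq_top_iff'.mpr fun φ => FiniteDimensional.mem_span_of_iInf_ker_le_ker ?_
    intro w hw
    have : (w : ι → K) = 0 := funext fun i => (Submodule.mem_iInf _).mp hw i
    simp [Subtype.ext (this.trans W.coe_zero.symm)]
  obtain ⟨κ, a, ha, hspan', hli⟩ := exists_linearIndependent' K coord
  have : Fintype κ := Fintype.ofInjective a ha
  refine ⟨Finset.univ.map ⟨a, ha⟩, ?_, fun w hw hT => ?_⟩
  · rw [Finset.card_map, Finset.card_univ, ← Subspace.dual_finrank_eq, ← finrank_top,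
      ← hspan, ← hspan', finrank_span_eq_card hli]
  · have hzero : Submodule.span K (Set.range (coord ∘ a)) ≤
        LinearMap.ker (Module.Dual.eval K W ⟨w, hw⟩) := by
      rw [Submodule.span_le]
      rintro _ ⟨j, rfl⟩
      exact hT _ (Finset.mem_map_of_mem _ (Finset.mem_univ j))
    rw [hspan', hspan, top_le_iff] at hzero
    simpa using (Module.forall_dual_apply_eq_zero_iff K (⟨w, hw⟩ : W)).mp
      fun φ => LinearMap.mem_ker.mp (hzero ▸ Submodule.mem_top : φ ∈ _)

theorem card_le_card_pow_finrank_of_forall_sub_mem {ι : Type*} [Fintype ι] (A : Finset (ι → ℤ))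
    (I : Finset ℤ) (hI : ∀ x ∈ A, ∀ i, x i ∈ I) (W : Submodule ℚ (ι → ℚ))
    (hW : ∀ x ∈ A, ∀ y ∈ A, (fun i => ((x i - y i : ℤ) : ℚ)) ∈ W) :
    A.card ≤ I.card ^ Module.finrank ℚ W := by
  classical
  obtain ⟨T, hT, hzero⟩ := W.exists_finset_card_eq_finrank_forall_eq_zero
  calc A.card ≤ (Fintype.piFinset fun _ : T => I).card := by
        refine Finset.card_le_card_of_injOn (fun x (i : T) => x i)
          (fun x hx => Fintype.mem_piFinset.mpr fun i => hI x hx i) fun x hx y hy hxy => ?_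
        have := hzero _ (hW x hx y hy) fun i hi => by simpa [sub_eq_zero] using congrFun hxy ⟨i, hi⟩
        funext i
        simpa [sub_eq_zero] using congrFun this i
    _ = I.card ^ Module.finrank ℚ W := by simp [hT]

section projEntropy

variable {β γ : Type*} [DecidableEq γ]

theorem sum_card_filter_div_card_eq_one (P : Finset β) (hP : P.Nonempty) (f : β → γ) :
    ∑ y ∈ P.image f, ((P.filter fun x => f x = y).card : ℝ) / P.card = 1 := by
  rw [← Finset.sum_div, div_eq_one_iff_eq (by exact_mod_cast hP.card_pos.ne')]
  exact_mod_cast (Finset.card_eq_sum_card_image f P).symm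

theorem card_filter_pos_of_mem_image (P : Finset β) (f : β → γ) {y : γ} (hy : y ∈ P.image f) :
    0 < (P.filter fun x => f x = y).card := by
  obtain ⟨x, hx, rfl⟩ := Finset.mem_image.mp hy
  exact Finset.card_pos.mpr ⟨x, Finset.mem_filter.mpr ⟨hx, rfl⟩⟩

theorem projEntropy_le_log_card_image [DecidableEq β] (P : Finset β) (hP : P.Nonempty)
    (f : β → γ) :
    projEntropy P f ≤ Real.log (P.image f).card :=
  Real.sum_negMulLog_le_log_card _ (fun y hy => by
      have := card_filter_pos_of_mem_image P f hy
      have := hP.card_pos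
      positivity)
    (sum_card_filter_div_card_eq_one P hP f)

theorem log_card_sub_log_le_projEntropy [DecidableEq β] (P : Finset β) (hP : P.Nonempty)
    (f : β → γ) {M : ℕ} (hM : ∀ y ∈ P.image f, (P.filter fun x => f x = y).card ≤ M) :
    Real.log P.card - Real.log M ≤ projEntropy P f := by
  have hPpos : (0 : ℝ) < P.card := by exact_mod_cast hP.card_pos
  have hMpos : (0 : ℝ) < M := by
    obtain ⟨x, hx⟩ := hP
    exact_mod_cast (card_filter_pos_of_mem_image P f (Finset.mem_image_of_mem f hx)).trans_le
      (hM _ (Finset.mem_image_of_mem f hx))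
  rw [← neg_sub, ← Real.log_div hMpos.ne' hPpos.ne']
  refine Real.neg_log_le_sum_negMulLog (fun y hy => ?_) (fun y hy => ?_)
    (sum_card_filter_div_card_eq_one P hP f)
  · have := card_filter_pos_of_mem_image P f hy
    positivity
  · gcongr
    exact_mod_cast hM y hy

end projEntropy

theorem Matrix.intCast_comp_mulVec {m n : Type*} [Fintype n] (M : Matrix m n ℤ) (v : n → ℤ) :
    ((↑) : ℤ → ℚ) ∘ (M *ᵥ v) = M.map ((↑) : ℤ → ℚ) *ᵥ (((↑) : ℤ → ℚ) ∘ v) :=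
  funext (RingHom.map_mulVec (Int.castRingHom ℚ) M v)

theorem Matrix.mul_eq_zero_of_forall_map_mulVec_mulVec_eq_zero {l m n : Type*} [Fintype m]
    [Fintype n] {F : Matrix l m ℤ} {K : Matrix m n ℤ}
    (h : ∀ c, F.map ((↑) : ℤ → ℚ) *ᵥ (K.map ((↑) : ℤ → ℚ) *ᵥ c) = 0) : F * K = 0 := by
  have hQ : (F * K).map ((↑) : ℤ → ℚ) = 0 := by
    rw [show (F * K).map ((↑) : ℤ → ℚ) = (F * K).map (Int.castRingHom ℚ) from rfl,
      Matrix.map_mul, Matrix.ext_iff_mulVec]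
    simpa [Matrix.mulVec_mulVec] using h
  exact Matrix.map_injective Int.cast_injective (hQ.trans (Matrix.map_zero _ Int.cast_zero).symm)

theorem Matrix.mulVec_injective_of_map {m n : Type*} [Fintype n] {K : Matrix m n ℤ}
    (h : ∀ c, K.map ((↑) : ℤ → ℚ) *ᵥ c = 0 → c = 0) : Function.Injective K.mulVec := by
  intro c c' hcc
  have := h (((↑) : ℤ → ℚ) ∘ c - (↑) ∘ c') (by
    rw [Matrix.mulVec_sub, ← Matrix.intCast_comp_mulVec, ← Matrix.intCast_comp_mulVec, hcc,
      sub_self])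
  funext j
  simpa [sub_eq_zero] using congrFun this j

theorem Matrix.rank_add_finrank_ker_mulVecLin {K m n : Type*} [Field K] [Fintype n]
    (A : Matrix m n K) :
    A.rank + Module.finrank K (LinearMap.ker A.mulVecLin) = Fintype.card n := by
  rw [Matrix.rank, LinearMap.finrank_range_add_finrank_ker, Module.finrank_fintype_fun_eq_card]

theorem card_Icc_neg_natCast (k : ℕ) : (Finset.Icc (-(k : ℤ)) k).card = 2 * k + 1 := by
  rw [Int.card_Icc]; omega

theorem polytopePts_nonempty (u m : ℕ) (F : Matrix (Fin u) (Fin m) ℤ) (k : ℕ) :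
    (polytopePts u m F k).Nonempty :=
  ⟨0, Finset.mem_filter.mpr ⟨Fintype.mem_piFinset.mpr fun _ => by simp, Matrix.mulVec_zero F⟩⟩

section polytopePts

variable {u m r : ℕ} {F : Matrix (Fin u) (Fin m) ℤ} {K : Matrix (Fin m) (Fin r) ℤ}

theorem mem_Icc_of_mem_polytopePts {k : ℕ} {x : Fin m → ℤ} (hx : x ∈ polytopePts u m F k)
    (i : Fin m) : x i ∈ Finset.Icc (-(k : ℤ)) k :=
  Fintype.mem_piFinset.mp (Finset.mem_filter.mp hx).1 i

theorem exists_sub_eq_mulVec_of_mem_polytopePts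
    (hker : ∀ x, F.map ((↑) : ℤ → ℚ) *ᵥ x = 0 → ∃ c, x = K.map ((↑) : ℤ → ℚ) *ᵥ c)
    {k : ℕ} {x y : Fin m → ℤ} (hx : x ∈ polytopePts u m F k) (hy : y ∈ polytopePts u m F k) :
    ∃ c, (fun i => ((x i - y i : ℤ) : ℚ)) = K.map ((↑) : ℤ → ℚ) *ᵥ c := by
  apply hker
  have hF : F *ᵥ (x - y) = 0 := by
    rw [Matrix.mulVec_sub, (Finset.mem_filter.mp hx).2, (Finset.mem_filter.mp hy).2, sub_self]
  have := Matrix.intCast_comp_mulVec F (x - y)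
  rw [hF] at this
  exact this.symm.trans (by ext; simp)

theorem card_image_restrict_polytopePts_le
    (hker : ∀ x, F.map ((↑) : ℤ → ℚ) *ᵥ x = 0 → ∃ c, x = K.map ((↑) : ℤ → ℚ) *ᵥ c)
    (S : Finset (Fin m)) (k : ℕ) :
    ((polytopePts u m F k).image fun x (i : S) => x i).card ≤
      (2 * k + 1) ^ ((K.map ((↑) : ℤ → ℚ)).submatrix (Subtype.val : S → Fin m) id).rank := by
  rw [← card_Icc_neg_natCast k, Matrix.rank]
  refine card_le_card_pow_finrank_of_forall_sub_mem _ _ ?_ _ ?_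
  · simp only [Finset.mem_image]
    rintro _ ⟨x, hx, rfl⟩ i
    exact mem_Icc_of_mem_polytopePts hx i
  · simp only [Finset.mem_image]
    rintro _ ⟨x, hx, rfl⟩ _ ⟨y, hy, rfl⟩
    obtain ⟨c, hc⟩ := exists_sub_eq_mulVec_of_mem_polytopePts hker hx hy
    exact ⟨c, funext fun i => (congrFun hc i).symm⟩

theorem card_filter_restrict_polytopePts_le
    (hker : ∀ x, F.map ((↑) : ℤ → ℚ) *ᵥ x = 0 → ∃ c, x = K.map ((↑) : ℤ → ℚ) *ᵥ c)
    (S : Finset (Fin m)) (k : ℕ) (y : S → ℤ) :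
    ((polytopePts u m F k).filter fun x => (fun i : S => x i) = y).card ≤
      (2 * k + 1) ^ Module.finrank ℚ (LinearMap.ker
        ((K.map ((↑) : ℤ → ℚ)).submatrix (Subtype.val : S → Fin m) id).mulVecLin) := by
  have hdiff : ∀ x ∈ (polytopePts u m F k).filter (fun x => (fun i : S => x i) = y),
      ∀ x' ∈ (polytopePts u m F k).filter (fun x => (fun i : S => x i) = y),
      (fun i => ((x i - x' i : ℤ) : ℚ)) ∈ (LinearMap.ker ((K.map ((↑) : ℤ → ℚ)).submatrix
        (Subtype.val : S → Fin m) id).mulVecLin).map (K.map ((↑) : ℤ → ℚ)).mulVecLin := by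
    intro x hx x' hx'
    obtain ⟨hx, hxy⟩ := Finset.mem_filter.mp hx
    obtain ⟨hx', hx'y⟩ := Finset.mem_filter.mp hx'
    obtain ⟨c, hc⟩ := exists_sub_eq_mulVec_of_mem_polytopePts hker hx hx'
    refine Submodule.mem_map.mpr ⟨c, LinearMap.mem_ker.mpr ?_, hc.symm⟩
    funext i
    change (K.map ((↑) : ℤ → ℚ) *ᵥ c) i = 0
    simp [← hc, congrFun (hxy.trans hx'y.symm) i]
  refine (card_le_card_pow_finrank_of_forall_sub_mem _ _
    (fun x hx => mem_Icc_of_mem_polytopePts (Finset.mem_filter.mp hx).1) _ hdiff).trans ?_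
  rw [card_Icc_neg_natCast]
  exact Nat.pow_le_pow_right (Nat.succ_pos _) (Submodule.finrank_map_le _ _)

theorem exists_pos_forall_pow_le_card_polytopePts (hFK : F * K = 0)
    (hK : Function.Injective K.mulVec) :
    ∃ D : ℕ, 0 < D ∧ ∀ k, (2 * (k / D) + 1) ^ r ≤ (polytopePts u m F k).card := by
  -- `D` exceeds every row sum of `|K|`, so `K` maps the box of radius `k / D` into that of
  -- radius `k`.
  refine ⟨∑ i, ∑ j, (K i j).natAbs + 1, Nat.succ_pos _, fun k => ?_⟩
  set D := ∑ i, ∑ j, (K i j).natAbs + 1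
  set B := k / D
  have hmaps : ∀ c ∈ Fintype.piFinset fun _ : Fin r => Finset.Icc (-(B : ℤ)) B,
      K *ᵥ c ∈ polytopePts u m F k := by
    intro c hc
    refine Finset.mem_filter.mpr ⟨Fintype.mem_piFinset.mpr fun i => ?_, by
      rw [Matrix.mulVec_mulVec, hFK, Matrix.zero_mulVec]⟩
    have hc : ∀ j, |c j| ≤ B := fun j =>
      abs_le.mpr (Finset.mem_Icc.mp (Fintype.mem_piFinset.mp hc j))
    have hrow : ∑ j, (K i j).natAbs ≤ D - 1 := by
      have := Finset.single_le_sum (f := fun i => ∑ j, (K i j).natAbs)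
        (fun i _ => Nat.zero_le (∑ j, (K i j).natAbs)) (Finset.mem_univ i)
      omega
    have hDB : D * B ≤ k := Nat.mul_div_le k D
    rw [Finset.mem_Icc, ← abs_le]
    calc |(K *ᵥ c) i| ≤ ∑ j, |K i j| * |c j| := by
          simpa only [Matrix.mulVec, dotProduct, abs_mul] using
            Finset.abs_sum_le_sum_abs (fun j => K i j * c j) Finset.univ
      _ ≤ ∑ j, |K i j| * B := by gcongr with j; exact hc j
      _ = ((∑ j, (K i j).natAbs) * B : ℕ) := by
          push_cast [Int.natCast_natAbs, Finset.sum_mul]; rfl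
      _ ≤ k := by exact_mod_cast (Nat.mul_le_mul_right B (by omega)).trans hDB
  calc (2 * B + 1) ^ r = (Fintype.piFinset fun _ : Fin r => Finset.Icc (-(B : ℤ)) B).card := by
        rw [Fintype.card_piFinset, card_Icc_neg_natCast, Finset.prod_const, Finset.card_univ,
          Fintype.card_fin]
    _ ≤ (polytopePts u m F k).card :=
        Finset.card_le_card_of_injOn _ hmaps hK.injOn

theorem projEntropy_restrict_polytopePts_le
    (hker : ∀ x, F.map ((↑) : ℤ → ℚ) *ᵥ x = 0 → ∃ c, x = K.map ((↑) : ℤ → ℚ) *ᵥ c)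
    (S : Finset (Fin m)) (k : ℕ) :
    projEntropy (polytopePts u m F k) (fun x (i : S) => x i) ≤
      ((K.map ((↑) : ℤ → ℚ)).submatrix (Subtype.val : S → Fin m) id).rank *
        Real.log (2 * k + 1) := by
  refine (projEntropy_le_log_card_image _ (polytopePts_nonempty u m F k) _).trans ?_
  rw [← Real.log_pow]
  refine Real.log_le_log (by exact_mod_cast ((polytopePts_nonempty u m F k).image _).card_pos) ?_
  exact_mod_cast card_image_restrict_polytopePts_le hker S k

theorem log_card_sub_le_projEntropy_restrict_polytopePts
    (hker : ∀ x, F.map ((↑) : ℤ → ℚ) *ᵥ x = 0 → ∃ c, x = K.map ((↑) : ℤ → ℚ) *ᵥ c)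
    (S : Finset (Fin m)) (k : ℕ) :
    Real.log (polytopePts u m F k).card - Module.finrank ℚ (LinearMap.ker
        ((K.map ((↑) : ℤ → ℚ)).submatrix (Subtype.val : S → Fin m) id).mulVecLin) *
        Real.log (2 * k + 1) ≤
      projEntropy (polytopePts u m F k) (fun x (i : S) => x i) := by
  rw [← Real.log_pow]
  exact_mod_cast log_card_sub_log_le_projEntropy _ (polytopePts_nonempty u m F k) _
    fun y _ => card_filter_restrict_polytopePts_le hker S k y

end polytopePts

theorem tendsto_log_div_log_of_le_mul {f : ℕ → ℝ} {C : ℝ} (hC : 0 < C)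
    (hlo : ∀ᶠ k : ℕ in atTop, (k : ℝ) ≤ C * f k) (hhi : ∀ᶠ k : ℕ in atTop, f k ≤ C * k) :
    Tendsto (fun k => Real.log (f k) / Real.log k) atTop (nhds 1) := by
  have hinv : Tendsto (fun k : ℕ => Real.log C / Real.log k) atTop (nhds 0) := by
    simpa [div_eq_mul_inv] using
      ((Real.tendsto_log_atTop.comp tendsto_natCast_atTop_atTop).inv_tendsto_atTop).const_mul
        (Real.log C)
  have hbounds : ∀ᶠ k : ℕ in atTop, 1 - Real.log C / Real.log k ≤ Real.log (f k) / Real.log k ∧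
      Real.log (f k) / Real.log k ≤ 1 + Real.log C / Real.log k := by
    filter_upwards [hlo, hhi, eventually_ge_atTop 2] with k hlo hhi hk
    have hk : (1 : ℝ) < k := by exact_mod_cast hk
    have hlogk := Real.log_pos hk
    have hf : 0 < f k := pos_of_mul_pos_right (by linarith) hC.le
    have hlo' : Real.log k ≤ Real.log C + Real.log (f k) := by
      rw [← Real.log_mul hC.ne' hf.ne']; exact Real.log_le_log (by linarith) hlo
    have hhi' : Real.log (f k) ≤ Real.log C + Real.log k := by
      rw [← Real.log_mul hC.ne' (by linarith)]; exact Real.log_le_log hf hhi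
    constructor
    · rw [one_sub_div hlogk.ne']; gcongr; linarith
    · rw [one_add_div hlogk.ne']; gcongr; linarith
  exact tendsto_of_tendsto_of_tendsto_of_le_of_le' (by simpa using (tendsto_const_nhds.sub hinv))
    (by simpa using tendsto_const_nhds.add hinv) (hbounds.mono fun _ h => h.1)
    (hbounds.mono fun _ h => h.2)

theorem tendsto_log_two_mul_add_one_div_log :
    Tendsto (fun k : ℕ => Real.log (2 * k + 1) / Real.log k) atTop (nhds 1) :=
  tendsto_log_div_log_of_le_mul three_pos
    (.of_forall fun k => by linarith [k.cast_nonneg' (α := ℝ)])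
    (eventually_ge_atTop 1 |>.mono fun k hk => by
      linarith [show (1 : ℝ) ≤ k by exact_mod_cast hk])

theorem tendsto_log_two_mul_div_add_one_div_log {D : ℕ} (hD : 0 < D) :
    Tendsto (fun k : ℕ => Real.log (2 * (k / D : ℕ) + 1) / Real.log k) atTop (nhds 1) := by
  have hD' : (0 : ℝ) < D := by exact_mod_cast hD
  refine tendsto_log_div_log_of_le_mul (C := 3 * D) (by positivity) (.of_forall fun k => ?_)
    (eventually_ge_atTop 1 |>.mono fun k hk => ?_)
  · have : k ≤ D * (2 * (k / D) + 1) :=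
      (Nat.lt_mul_div_succ k hD).le.trans (Nat.mul_le_mul_left D (by omega))
    have : (k : ℝ) ≤ D * (2 * (k / D : ℕ) + 1) := by exact_mod_cast this
    nlinarith
  · have : 2 * (k / D) + 1 ≤ 3 * D * k := by
      have := Nat.div_le_self k D
      nlinarith
    exact_mod_cast this

/-- Proposition 1: if `X` is uniform on the polytope `P_k` and the columns of `K`
form a basis of the null space of `F`, then for every coordinate set `S`,
`H(X_S) / log k → rank(K_S)` as `k → ∞`. -/
theorem stmt7 (u m r : ℕ) (F : Matrix (Fin u) (Fin m) ℤ) (K : Matrix (Fin m) (Fin r) ℤ)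
    (hspan : ∀ x : Fin m → ℚ, (F.map (Int.cast : ℤ → ℚ)).mulVec x = 0 ↔
      ∃ c : Fin r → ℚ, x = (K.map (Int.cast : ℤ → ℚ)).mulVec c)
    (hindep : ∀ c : Fin r → ℚ, (K.map (Int.cast : ℤ → ℚ)).mulVec c = 0 → c = 0)
    (S : Finset (Fin m)) :
    Tendsto (fun k : ℕ =>
        projEntropy (polytopePts u m F k)
          (fun x => fun i : {i : Fin m // i ∈ S} => x i) / Real.log k)
      atTop
      (nhds (((K.map (Int.cast : ℤ → ℚ)).submatrix
        (Subtype.val : {i : Fin m // i ∈ S} → Fin m) id).rank : ℝ)) := by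
  set KS := (K.map (Int.cast : ℤ → ℚ)).submatrix (Subtype.val : {i : Fin m // i ∈ S} → Fin m) id
  set n := Module.finrank ℚ (LinearMap.ker KS.mulVecLin)
  have hrank : (KS.rank : ℝ) + n = r := by
    exact_mod_cast (KS.rank_add_finrank_ker_mulVecLin).trans (Fintype.card_fin r)
  have hker : ∀ x, F.map ((↑) : ℤ → ℚ) *ᵥ x = 0 → ∃ c, x = K.map ((↑) : ℤ → ℚ) *ᵥ c :=
    fun x => (hspan x).mp
  obtain ⟨D, hD, hcard⟩ := exists_pos_forall_pow_le_card_polytopePts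
    (Matrix.mul_eq_zero_of_forall_map_mulVec_mulVec_eq_zero fun c => (hspan _).mpr ⟨c, rfl⟩)
    (Matrix.mulVec_injective_of_map hindep)
  have hlower : ∀ k : ℕ, r * Real.log (2 * (k / D : ℕ) + 1) - n * Real.log (2 * k + 1) ≤
      projEntropy (polytopePts u m F k) (fun x (i : S) => x i) := fun k => by
    refine le_trans ?_ (log_card_sub_le_projEntropy_restrict_polytopePts hker S k)
    rw [← Real.log_pow]
    gcongr
    exact_mod_cast hcard k
  refine tendsto_of_tendsto_of_tendsto_of_le_of_le'
    (g := fun k : ℕ => (r * Real.log (2 * (k / D : ℕ) + 1) - n * Real.log (2 * k + 1)) / Real.log k)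
    (h := fun k : ℕ => KS.rank * Real.log (2 * k + 1) / Real.log k) ?_ ?_
    (.of_forall fun k => div_le_div_of_nonneg_right (hlower k) (Real.log_natCast_nonneg k))
    (.of_forall fun k => div_le_div_of_nonneg_right
      (projEntropy_restrict_polytopePts_le hker S k) (Real.log_natCast_nonneg k))
  · rw [show (KS.rank : ℝ) = r * 1 - n * 1 by linarith]
    exact (((tendsto_log_two_mul_div_add_one_div_log hD).const_mul (r : ℝ)).sub
      (tendsto_log_two_mul_add_one_div_log.const_mul (n : ℝ))).congr fun k => by ring
  · simpa [mul_div_assoc] using tendsto_log_two_mul_add_one_div_log.const_mul (KS.rank : ℝ)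
end

section
/- Let X, Y, Z be random variables in {0,1} whose joint distribution is uniform on the set {(x,y,z) ∈ {0,1}^3 : x+y+z = 1} (i.e., each of (0,0,1), (0,1,0), (1,0,0) has probability 1/3). If random variables X', Y', Z' satisfy (X',Y') ~ (X,Y), (X',Z') ~ (X,Z), and (Y',Z') ~ (Y,Z), then (X',Y',Z') ~ (X,Y,Z). -/
open MeasureTheory ProbabilityTheory Measure
open scoped ENNReal

/-!
Each support point of the law of Table I is the intersection of two pairwise events that lie in
a one-coordinate event of the same mass `1/3`, e.g. `{(0,0,1)} = {X = 0, Z = 1} ∩ {Y = 0, Z = 1}`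
inside `{Z = 1}`. Under any law with the same pairwise marginals the two events therefore agree
a.e. with the larger one, so each of the three points again carries mass `1/3`; these masses
already exhaust the total mass `1`.
-/

section

variable {α β : Type*} [MeasurableSpace α] [MeasurableSpace β]

lemma measure_inter_eq_of_subset_of_measure_eq {μ : Measure α} {s t u : Set α} {c : ℝ≥0∞}
    (hs : NullMeasurableSet s μ) (ht : NullMeasurableSet t μ) (hsu : s ⊆ u) (htu : t ⊆ u)
    (hμs : μ s = c) (hμt : μ t = c) (hμu : μ u = c) (hc : c ≠ ∞) : μ (s ∩ t) = c := by
  have hs_ae := ae_eq_of_subset_of_measure_ge hsu (hμu.trans hμs.symm).le hs (hμu ▸ hc)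
  have ht_ae := ae_eq_of_subset_of_measure_ge htu (hμu.trans hμt.symm).le ht (hμu ▸ hc)
  rw [measure_congr (hs_ae.inter ht_ae), Set.inter_self, hμu]

lemma measure_preimage_eq_of_map_eq {μ ν : Measure α} {f : α → β} (hf : Measurable f)
    (h : μ.map f = ν.map f) {s : Set β} (hs : MeasurableSet s) : μ (f ⁻¹' s) = ν (f ⁻¹' s) := by
  rw [← map_apply hf hs, h, map_apply hf hs]

lemma measure_preimage_inter_preimage_eq_of_map_eq [MeasurableSingletonClass β] {μ ν : Measure α}
    {f g : α → β} (hf : Measurable f) (hg : Measurable g) (hμν_f : μ.map f = ν.map f)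
    (hμν_g : μ.map g = ν.map g) {x y : β} {u : Set β} (hu : MeasurableSet u)
    (hxu : f ⁻¹' {x} ⊆ f ⁻¹' u) (hyu : g ⁻¹' {y} ⊆ f ⁻¹' u) {c : ℝ≥0∞}
    (hνx : ν (f ⁻¹' {x}) = c) (hνy : ν (g ⁻¹' {y}) = c) (hνu : ν (f ⁻¹' u) = c) (hc : c ≠ ∞) :
    μ (f ⁻¹' {x} ∩ g ⁻¹' {y}) = c := by
  have hx := measurableSet_singleton x
  have hy := measurableSet_singleton y
  refine measure_inter_eq_of_subset_of_measure_eq (hf hx).nullMeasurableSet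
    (hg hy).nullMeasurableSet hxu hyu ?_ ?_ ?_ hc
  · rw [measure_preimage_eq_of_map_eq hf hμν_f hx, hνx]
  · rw [measure_preimage_eq_of_map_eq hg hμν_g hy, hνy]
  · rw [measure_preimage_eq_of_map_eq hf hμν_f hu, hνu]

lemma smul_dirac_add_smul_dirac_add_smul_dirac_le [MeasurableSingletonClass α] (μ : Measure α)
    {x y z : α} (hxy : x ≠ y) (hxz : x ≠ z) (hyz : y ≠ z) :
    μ {x} • dirac x + μ {y} • dirac y + μ {z} • dirac z ≤ μ := by
  simp_rw [← restrict_singleton]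
  rw [← restrict_union (by simpa using hxy) (measurableSet_singleton y),
    ← restrict_union (by simp [hxz.symm, hyz.symm]) (measurableSet_singleton z)]
  exact restrict_le_self

end

section

variable {α : Type*} [MeasurableSpace α]

def proj₁₂ (q : α × α × α) : α × α := (q.1, q.2.1)
def proj₁₃ (q : α × α × α) : α × α := (q.1, q.2.2)
def proj₂₃ (q : α × α × α) : α × α := (q.2.1, q.2.2)

lemma measurable_proj₁₂ : Measurable (proj₁₂ : α × α × α → α × α) :=
  measurable_fst.prodMk measurable_snd.fst
lemma measurable_proj₁₃ : Measurable (proj₁₃ : α × α × α → α × α) :=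
  measurable_fst.prodMk measurable_snd.snd
lemma measurable_proj₂₃ : Measurable (proj₂₃ : α × α × α → α × α) :=
  measurable_snd.fst.prodMk measurable_snd.snd

/-- `uniformOneHot 0 1` is the law of Table I. -/
noncomputable def uniformOneHot (a b : α) : Measure (α × α × α) :=
  (3⁻¹ : ℝ≥0∞) • dirac (a, a, b) + (3⁻¹ : ℝ≥0∞) • dirac (a, b, a) +
    (3⁻¹ : ℝ≥0∞) • dirac (b, a, a)

instance (a b : α) : IsProbabilityMeasure (uniformOneHot a b) :=
  ⟨by simp [uniformOneHot, ENNReal.inv_three_add_inv_three]⟩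

variable [MeasurableSingletonClass α] {a b : α} {m : Measure (α × α × α)}

lemma measure_singleton_aab_of_map_proj_eq (hab : a ≠ b)
    (h₁₃ : m.map proj₁₃ = (uniformOneHot a b).map proj₁₃)
    (h₂₃ : m.map proj₂₃ = (uniformOneHot a b).map proj₂₃) : m {(a, a, b)} = 3⁻¹ := by
  have hpt : {(a, a, b)} = proj₁₃ ⁻¹' {(a, b)} ∩ proj₂₃ ⁻¹' {(a, b)} := by
    ext ⟨x, y, z⟩
    simp only [Set.mem_singleton_iff, Set.mem_inter_iff, Set.mem_preimage, Prod.mk.injEq,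
      proj₁₃, proj₂₃]
    tauto
  rw [hpt]
  refine measure_preimage_inter_preimage_eq_of_map_eq measurable_proj₁₃ measurable_proj₂₃ h₁₃ h₂₃
    (measurable_snd (measurableSet_singleton b)) (fun q hq => by simp_all [proj₁₃])
    (fun q hq => by simp_all [proj₁₃, proj₂₃]) ?_ ?_ ?_ (by simp)
  all_goals simp [uniformOneHot, proj₁₃, proj₂₃, hab]

lemma measure_singleton_aba_of_map_proj_eq (hab : a ≠ b)
    (h₁₂ : m.map proj₁₂ = (uniformOneHot a b).map proj₁₂)
    (h₂₃ : m.map proj₂₃ = (uniformOneHot a b).map proj₂₃) : m {(a, b, a)} = 3⁻¹ := by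
  have hpt : {(a, b, a)} = proj₁₂ ⁻¹' {(a, b)} ∩ proj₂₃ ⁻¹' {(b, a)} := by
    ext ⟨x, y, z⟩
    simp only [Set.mem_singleton_iff, Set.mem_inter_iff, Set.mem_preimage, Prod.mk.injEq,
      proj₁₂, proj₂₃]
    tauto
  rw [hpt]
  refine measure_preimage_inter_preimage_eq_of_map_eq measurable_proj₁₂ measurable_proj₂₃ h₁₂ h₂₃
    (measurable_snd (measurableSet_singleton b)) (fun q hq => by simp_all [proj₁₂])
    (fun q hq => by simp_all [proj₁₂, proj₂₃]) ?_ ?_ ?_ (by simp)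
  all_goals simp [uniformOneHot, proj₁₂, proj₂₃, hab]

lemma measure_singleton_baa_of_map_proj_eq (hab : a ≠ b)
    (h₁₂ : m.map proj₁₂ = (uniformOneHot a b).map proj₁₂)
    (h₁₃ : m.map proj₁₃ = (uniformOneHot a b).map proj₁₃) : m {(b, a, a)} = 3⁻¹ := by
  have hpt : {(b, a, a)} = proj₁₂ ⁻¹' {(b, a)} ∩ proj₁₃ ⁻¹' {(b, a)} := by
    ext ⟨x, y, z⟩
    simp only [Set.mem_singleton_iff, Set.mem_inter_iff, Set.mem_preimage, Prod.mk.injEq,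
      proj₁₂, proj₁₃]
    tauto
  rw [hpt]
  refine measure_preimage_inter_preimage_eq_of_map_eq measurable_proj₁₂ measurable_proj₁₃ h₁₂ h₁₃
    (measurable_fst (measurableSet_singleton b)) (fun q hq => by simp_all [proj₁₂])
    (fun q hq => by simp_all [proj₁₂, proj₁₃]) ?_ ?_ ?_ (by simp)
  all_goals simp [uniformOneHot, proj₁₂, proj₁₃, hab]

theorem eq_uniformOneHot_of_map_proj_eq (hab : a ≠ b)
    (h₁₂ : m.map proj₁₂ = (uniformOneHot a b).map proj₁₂)
    (h₁₃ : m.map proj₁₃ = (uniformOneHot a b).map proj₁₃)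
    (h₂₃ : m.map proj₂₃ = (uniformOneHot a b).map proj₂₃) :
    m = uniformOneHot a b := by
  have h_univ : m Set.univ = 1 := by
    simpa using measure_preimage_eq_of_map_eq measurable_proj₁₂ h₁₂ MeasurableSet.univ
  have h_le := smul_dirac_add_smul_dirac_add_smul_dirac_le m (x := (a, a, b)) (y := (a, b, a))
    (z := (b, a, a)) (by simp [hab]) (by simp [hab]) (by simp [hab])
  rw [measure_singleton_aab_of_map_proj_eq hab h₁₃ h₂₃,
    measure_singleton_aba_of_map_proj_eq hab h₁₂ h₂₃,
    measure_singleton_baa_of_map_proj_eq hab h₁₂ h₁₃] at h_le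
  exact (eq_of_le_of_measure_univ_eq (μ := uniformOneHot a b) h_le
    (by rw [measure_univ, h_univ])).symm

end

lemma map_map_eq_of_identDistrib {Ω Ω' β γ : Type*} [MeasurableSpace Ω] [MeasurableSpace Ω']
    [MeasurableSpace β] [MeasurableSpace γ] {μ : Measure Ω} {ν : Measure Ω'}
    {F : Ω' → β} {G : Ω → β} {p : β → γ} (hp : Measurable p)
    (hF : AEMeasurable F ν) (hG : AEMeasurable G μ) (h : IdentDistrib (p ∘ F) (p ∘ G) ν μ) :
    (ν.map F).map p = (μ.map G).map p := by
  rw [AEMeasurable.map_map_of_aemeasurable hp.aemeasurable hF,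
    AEMeasurable.map_map_of_aemeasurable hp.aemeasurable hG, h.map_eq]

theorem stmt9_general {Ω Ω' : Type*} [MeasurableSpace Ω] [MeasurableSpace Ω']
    (μ : Measure Ω) (ν : Measure Ω')
    (X Y Z : Ω → ℕ) (X' Y' Z' : Ω' → ℕ)
    (hjoint : Measure.map (fun ω => (X ω, Y ω, Z ω)) μ =
      (3⁻¹ : ENNReal) • Measure.dirac ((0, 0, 1) : ℕ × ℕ × ℕ) +
      (3⁻¹ : ENNReal) • Measure.dirac ((0, 1, 0) : ℕ × ℕ × ℕ) +
      (3⁻¹ : ENNReal) • Measure.dirac ((1, 0, 0) : ℕ × ℕ × ℕ))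
    (hXY : IdentDistrib (fun ω => (X' ω, Y' ω)) (fun ω => (X ω, Y ω)) ν μ)
    (hXZ : IdentDistrib (fun ω => (X' ω, Z' ω)) (fun ω => (X ω, Z ω)) ν μ)
    (hYZ : IdentDistrib (fun ω => (Y' ω, Z' ω)) (fun ω => (Y ω, Z ω)) ν μ) :
    IdentDistrib (fun ω => (X' ω, Y' ω, Z' ω)) (fun ω => (X ω, Y ω, Z ω)) ν μ := by
  have hF : AEMeasurable (fun ω => (X' ω, Y' ω, Z' ω)) ν :=
    hXY.aemeasurable_fst.fst.prodMk (hXY.aemeasurable_fst.snd.prodMk hXZ.aemeasurable_fst.snd)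
  have hG : AEMeasurable (fun ω => (X ω, Y ω, Z ω)) μ :=
    hXY.aemeasurable_snd.fst.prodMk (hXY.aemeasurable_snd.snd.prodMk hXZ.aemeasurable_snd.snd)
  have hjoint' : μ.map (fun ω => (X ω, Y ω, Z ω)) = uniformOneHot 0 1 := hjoint
  refine ⟨hF, hG, ?_⟩
  rw [hjoint']
  apply eq_uniformOneHot_of_map_proj_eq zero_ne_one
  · rw [← hjoint']; exact map_map_eq_of_identDistrib measurable_proj₁₂ hF hG hXY
  · rw [← hjoint']; exact map_map_eq_of_identDistrib measurable_proj₁₃ hF hG hXZ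
  · rw [← hjoint']; exact map_map_eq_of_identDistrib measurable_proj₂₃ hF hG hYZ

/-- Table I instance: with `(X,Y,Z)` uniform on `{(0,0,1),(0,1,0),(1,0,0)}`,
matching pairwise marginals force the full joint distribution. -/
theorem stmt9 {Ω Ω' : Type*} [MeasurableSpace Ω] [MeasurableSpace Ω']
    (μ : Measure Ω) (ν : Measure Ω') [IsProbabilityMeasure μ] [IsProbabilityMeasure ν]
    (X Y Z : Ω → ℕ) (X' Y' Z' : Ω' → ℕ)
    (hX : Measurable X) (hY : Measurable Y) (hZ : Measurable Z)
    (hjoint : Measure.map (fun ω => (X ω, Y ω, Z ω)) μ =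
      (3⁻¹ : ENNReal) • Measure.dirac ((0, 0, 1) : ℕ × ℕ × ℕ) +
      (3⁻¹ : ENNReal) • Measure.dirac ((0, 1, 0) : ℕ × ℕ × ℕ) +
      (3⁻¹ : ENNReal) • Measure.dirac ((1, 0, 0) : ℕ × ℕ × ℕ))
    (hXY : IdentDistrib (fun ω => (X' ω, Y' ω)) (fun ω => (X ω, Y ω)) ν μ)
    (hXZ : IdentDistrib (fun ω => (X' ω, Z' ω)) (fun ω => (X ω, Z ω)) ν μ)
    (hYZ : IdentDistrib (fun ω => (Y' ω, Z' ω)) (fun ω => (Y ω, Z ω)) ν μ) :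
    IdentDistrib (fun ω => (X' ω, Y' ω, Z' ω)) (fun ω => (X ω, Y ω, Z ω)) ν μ :=
  stmt9_general μ ν X Y Z X' Y' Z' hjoint hXY hXZ hYZ
end
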